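/- Let X be a finite T₀-space, let A be a subspace of X with inclusion map i : A → X, and suppose r₁, r₂ : X → A are continuous retractions of i (i.e. r_k ∘ i = Id_A) such that i ∘ r_k ≤ Id_X for k = 1, 2, where ≤ is the pointwise specialization order. Then r₁ = r₂. -/

import Mathlib

open unitInterval

set_option autoImplicit false

universe u v

/-- The specialization preorder: `x ≤ y` iff every open set containing `y` contains `x`. -/
def specLE {X : Type*} [TopologicalSpace X] (x y : X) : Prop :=
  ∀ U : Set X, IsOpen U → y ∈ U → x ∈ U

/-- A continuous map `i : A → X` is a (Hurewicz) cofibration iff it has the homotopy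
extension property with respect to all topological spaces. -/
def IsCofibration {A : Type*} {X : Type*} [TopologicalSpace A] [TopologicalSpace X]
    (i : C(A, X)) : Prop :=
  ∀ (Z : Type v) [TopologicalSpace Z] (f : C(X, Z)) (H : C(A × I, Z)),
    (∀ a, H (a, 0) = f (i a)) →
    ∃ G : C(X × I, Z),
      (∀ x, G (x, 0) = f x) ∧ ∀ a t, G (i a, t) = H (a, t)

/-- `x` is a down beat point of the subspace `S`:
the set of points of `S` strictly below `x` has a maximum. -/
def IsDownBeatPoint {X : Type*} [TopologicalSpace X] (S : Set X) (x : X) : Prop :=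
  x ∈ S ∧ ∃ m ∈ S, m ≠ x ∧ specLE m x ∧
    ∀ z ∈ S, z ≠ x → specLE z x → specLE z m

/-- `T` is a dbp–retract of `S`: `T` is obtained from `S` by successively
removing down beat points. -/
inductive IsDbpRetract {X : Type*} [TopologicalSpace X] : Set X → Set X → Prop
  | refl (S : Set X) : IsDbpRetract S S
  | step {S T : Set X} (x : X) (hx : IsDownBeatPoint S x)
      (h : IsDbpRetract (S \ {x}) T) : IsDbpRetract S T

/-- The minimal open set containing `x` (in a finite space): the intersection of all
open sets containing `x`. -/
def minOpen {X : Type*} [TopologicalSpace X] (x : X) : Set X :=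
  ⋂₀ {U : Set X | IsOpen U ∧ x ∈ U}


/-!
Since `i ∘ r₁ ≤ Id_X`, we have `r₁ x ⤳ x` for every `x`; applying the continuous map `r₂`, which
fixes `r₁ x ∈ A`, gives `r₁ x ⤳ r₂ x`. By symmetry also `r₂ x ⤳ r₁ x`, and the specialization
order of the T₀-space `A` is antisymmetric.
-/

theorem specLE_iff_specializes {X : Type*} [TopologicalSpace X] {x y : X} :
    specLE x y ↔ x ⤳ y :=
  specializes_iff_forall_open.symm

theorem specializes_apply_of_retraction {X : Type*} [TopologicalSpace X] {A : Set X}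
    {r s : C(X, A)} (hs : ∀ a : A, s a = a) (hr : ∀ x, (r x : X) ⤳ x) (x : X) :
    r x ⤳ s x := by
  simpa only [hs] using (hr x).map s.continuous

theorem retraction_le_id_unique_general
    {X : Type u} [TopologicalSpace X] [T0Space X] (A : Set X)
    (r₁ r₂ : C(X, A))
    (h₁ : ∀ a : A, r₁ (a : X) = a) (h₂ : ∀ a : A, r₂ (a : X) = a)
    (hle₁ : ∀ x : X, specLE ((r₁ x : X)) x) (hle₂ : ∀ x : X, specLE ((r₂ x : X)) x) :
    r₁ = r₂ := by
  have hr₁ : ∀ x, (r₁ x : X) ⤳ x := fun x => specLE_iff_specializes.1 (hle₁ x)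
  have hr₂ : ∀ x, (r₂ x : X) ⤳ x := fun x => specLE_iff_specializes.1 (hle₂ x)
  ext1 x
  exact ((specializes_apply_of_retraction h₂ hr₁ x).antisymm
    (specializes_apply_of_retraction h₁ hr₂ x)).eq

/-- Let `X` be a finite T₀-space and `A ⊆ X` a subspace. Any two
continuous retractions `r₁, r₂ : X → A` of the inclusion with `i ∘ r_k ≤ Id_X` in the
pointwise specialization order coincide. -/
theorem retraction_le_id_unique
    {X : Type u} [TopologicalSpace X] [Finite X] [T0Space X] (A : Set X)
    (r₁ r₂ : C(X, A))
    (h₁ : ∀ a : A, r₁ (a : X) = a) (h₂ : ∀ a : A, r₂ (a : X) = a)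
    (hle₁ : ∀ x : X, specLE ((r₁ x : X)) x) (hle₂ : ∀ x : X, specLE ((r₂ x : X)) x) :
    r₁ = r₂ :=
  retraction_le_id_unique_general A r₁ r₂ h₁ h₂ hle₁ hle₂
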